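/- For all integers n ≥ 3 and m ≥ 2, the windmill graph W_n^m, consisting of m copies of the complete graph K_n all sharing exactly one common vertex (i.e. W_n^m = (m·K_{n−1}) ∨ K₁), satisfies η(W_n^m) = n − 1. -/

import Mathlib

open Classical in
/-- Sum of the labels `f` over the open neighborhood of `v` in `G`. -/
noncomputable def nbrSum {V : Type*} [Fintype V] (G : SimpleGraph V) (f : V → ℕ) (v : V) : ℕ :=
  ∑ w ∈ Finset.univ.filter (fun w => G.Adj v w), f w

open Classical in
/-- The degree of `v` in `G`. -/
noncomputable def deg {V : Type*} [Fintype V] (G : SimpleGraph V) (v : V) : ℕ :=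
  (Finset.univ.filter (fun w => G.Adj v w)).card

/-- `f : V → {1,…,k}` is an additive `k`-coloring of `G`: labels lie in `{1,…,k}` and
adjacent vertices get distinct open-neighborhood sums. -/
def IsAdditiveColoring {V : Type*} [Fintype V] (G : SimpleGraph V) (k : ℕ) (f : V → ℕ) : Prop :=
  (∀ v, 1 ≤ f v ∧ f v ≤ k) ∧ ∀ u v, G.Adj u v → nbrSum G f u ≠ nbrSum G f v

/-- The additive chromatic number `η(G)`: the least `k` admitting an additive `k`-coloring. -/
noncomputable def eta {V : Type*} [Fintype V] (G : SimpleGraph V) : ℕ :=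
  sInf {k | ∃ f : V → ℕ, IsAdditiveColoring G k f}

/-- The join `G ∨ K_q` of `G` with the complete graph on `q` vertices. -/
def joinK {α : Type*} (G : SimpleGraph α) (q : ℕ) : SimpleGraph (α ⊕ Fin q) where
  Adj x y :=
    match x, y with
    | Sum.inl u, Sum.inl v => G.Adj u v
    | Sum.inr i, Sum.inr j => i ≠ j
    | Sum.inl _, Sum.inr _ => True
    | Sum.inr _, Sum.inl _ => True
  symm := ⟨by
    rintro (u | i) (v | j) h
    · exact G.adj_symm h
    · trivial
    · trivial
    · exact Ne.symm h⟩
  loopless := ⟨by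
    rintro (u | i) h
    · exact G.irrefl h
    · exact h rfl⟩

/-- The disjoint union of `m` copies of the complete graph `K_t`. -/
def copiesK (m t : ℕ) : SimpleGraph (Fin m × Fin t) where
  Adj x y := x.1 = y.1 ∧ x.2 ≠ y.2
  symm := ⟨by rintro ⟨a, b⟩ ⟨c, d⟩ ⟨h1, h2⟩; exact ⟨h1.symm, h2.symm⟩⟩
  loopless := ⟨by rintro ⟨a, b⟩ ⟨_, h⟩; exact h rfl⟩

/-! Two adjacent vertices with the same closed neighbourhood have the same closed-neighbourhood
sum, so an additive colouring must separate them by their own labels; hence a blade `K_t` of the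
windmill needs `t` distinct labels. Conversely, labelling each blade `1, …, t` and the centre `1`
works: inside a blade the labels differ, and a blade vertex sees at most `1 + 2 + ⋯ + t`, while
the centre sees `m` times that. -/

open Classical

section AdditiveColoring

variable {V : Type*} [Fintype V] {G : SimpleGraph V}

lemma nbrSum_add_self (G : SimpleGraph V) (f : V → ℕ) (v : V) :
    nbrSum G f v + f v = ∑ w, if G.Adj v w ∨ w = v then f w else 0 := by
  rw [← Finset.sum_filter, nbrSum, add_comm, ← Finset.sum_insert (by simp)]
  congr 1
  ext w
  simp [or_comm]

lemma nbrSum_add_self_eq_of_closed_nbhd_eq {u v : V}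
    (h : ∀ w, G.Adj u w ∨ w = u ↔ G.Adj v w ∨ w = v) (f : V → ℕ) :
    nbrSum G f u + f u = nbrSum G f v + f v := by
  simp only [nbrSum_add_self, h]

lemma IsAdditiveColoring.injOn_of_closed_nbhd_eq {k : ℕ} {f : V → ℕ}
    (hf : IsAdditiveColoring G k f) {s : Set V}
    (hs : s.Pairwise fun u v => G.Adj u v ∧ ∀ w, G.Adj u w ∨ w = u ↔ G.Adj v w ∨ w = v) :
    s.InjOn f := by
  intro u hu v hv hfuv
  by_contra hne
  obtain ⟨hadj, htwin⟩ := hs hu hv hne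
  have := nbrSum_add_self_eq_of_closed_nbhd_eq htwin f
  exact hf.2 u v hadj (by omega)

lemma IsAdditiveColoring.card_le_of_closed_nbhd_eq {k : ℕ} {f : V → ℕ}
    (hf : IsAdditiveColoring G k f) {s : Finset V}
    (hs : (s : Set V).Pairwise fun u v =>
      G.Adj u v ∧ ∀ w, G.Adj u w ∨ w = u ↔ G.Adj v w ∨ w = v) :
    s.card ≤ k := by
  simpa using Finset.card_le_card_of_injOn f (fun v _ => Finset.mem_Icc.2 (hf.1 v))
    (hf.injOn_of_closed_nbhd_eq hs)

lemma eta_eq_of_isAdditiveColoring {k : ℕ} {f : V → ℕ} (hf : IsAdditiveColoring G k f)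
    (hmin : ∀ k' g, IsAdditiveColoring G k' g → k ≤ k') :
    eta G = k :=
  le_antisymm (Nat.sInf_le ⟨f, hf⟩) (le_csInf ⟨k, f, hf⟩ fun _ ⟨g, hg⟩ => hmin _ g hg)

end AdditiveColoring

section Windmill

variable {m t : ℕ}

lemma windmill_closed_nbhd_eq (i : Fin m) (j j' : Fin t) (w : Fin m × Fin t ⊕ Fin 1) :
    (joinK (copiesK m t) 1).Adj (.inl (i, j)) w ∨ w = .inl (i, j) ↔
      (joinK (copiesK m t) 1).Adj (.inl (i, j')) w ∨ w = .inl (i, j') := by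
  rcases w with ⟨i', j''⟩ | c
  · simp only [joinK, copiesK, Sum.inl.injEq, Prod.mk.injEq]
    tauto
  · simp [joinK]

lemma IsAdditiveColoring.le_of_windmill {k : ℕ} {f : Fin m × Fin t ⊕ Fin 1 → ℕ} (i : Fin m)
    (hf : IsAdditiveColoring (joinK (copiesK m t) 1) k f) : t ≤ k := by
  let blade : Fin t ↪ Fin m × Fin t ⊕ Fin 1 :=
    ⟨fun j => .inl (i, j), fun j j' h => by simpa using h⟩
  have hpair : ((Finset.univ.map blade : Finset _) : Set _).Pairwise fun u v =>
      (joinK (copiesK m t) 1).Adj u v ∧ ∀ w, (joinK (copiesK m t) 1).Adj u w ∨ w = u ↔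
        (joinK (copiesK m t) 1).Adj v w ∨ w = v := by
    simp only [Finset.coe_map, Finset.coe_univ, Set.image_univ]
    rintro - ⟨j, rfl⟩ - ⟨j', rfl⟩ hne
    exact ⟨⟨rfl, fun h => hne (congrArg blade h)⟩, windmill_closed_nbhd_eq i j j'⟩
  simpa using hf.card_le_of_closed_nbhd_eq hpair

lemma nbrSum_windmill_center (f : Fin m × Fin t ⊕ Fin 1 → ℕ) :
    nbrSum (joinK (copiesK m t) 1) f (.inr 0) = ∑ p, f (.inl p) := by
  rw [nbrSum, Finset.sum_filter, Fintype.sum_sum_type]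
  simp [joinK]

lemma nbrSum_windmill_blade (f : Fin m × Fin t ⊕ Fin 1 → ℕ) (i : Fin m) (j : Fin t) :
    nbrSum (joinK (copiesK m t) 1) f (.inl (i, j)) + f (.inl (i, j)) =
      f (.inr 0) + ∑ j', f (.inl (i, j')) := by
  rw [nbrSum_add_self, Fintype.sum_sum_type, Fintype.sum_prod_type, add_comm]
  have hblade : ∀ i' j', (i = i' ∧ j ≠ j' ∨ i' = i ∧ j' = j) ↔ i' = i := by tauto
  simp [joinK, copiesK, Fin.eq_zero, hblade]

lemma isAdditiveColoring_windmill (hm : 2 ≤ m) (ht : 1 ≤ t) :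
    IsAdditiveColoring (joinK (copiesK m t) 1) t (Sum.elim (fun p => p.2 + 1) fun _ => 1) := by
  set f : Fin m × Fin t ⊕ Fin 1 → ℕ := Sum.elim (fun p => p.2 + 1) fun _ => 1
  set T := ∑ j : Fin t, (j.val + 1)
  have hT : t ≤ T := by
    simpa using Finset.sum_le_sum (s := Finset.univ) fun (j : Fin t) _ => Nat.le_add_left 1 j.val
  have hblade (i : Fin m) (j : Fin t) :
      nbrSum (joinK (copiesK m t) 1) f (.inl (i, j)) + (j + 1) = 1 + T := by
    simpa [f] using nbrSum_windmill_blade f i j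
  have hcenter : nbrSum (joinK (copiesK m t) 1) f (.inr 0) = m * T := by
    simp [nbrSum_windmill_center, f, Fintype.sum_prod_type, T]
  refine ⟨?_, ?_⟩
  · rintro (⟨i, j⟩ | c)
    · simp only [f, Sum.elim_inl]
      omega
    · simpa [f] using ht
  · rintro (⟨i, j⟩ | c) (⟨i', j'⟩ | c') hadj heq
    · obtain ⟨rfl, hne⟩ : i = i' ∧ j ≠ j' := hadj
      have := hblade i j
      have := hblade i j'
      exact hne (Fin.ext (by omega))
    · rw [Fin.fin_one_eq_zero c', hcenter] at heq
      have := hblade i j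
      nlinarith
    · rw [Fin.fin_one_eq_zero c, hcenter] at heq
      have := hblade i' j'
      nlinarith
    · exact hadj (Subsingleton.elim c c')

end Windmill

/-- For `n ≥ 3` and `m ≥ 2`, the windmill `W_n^m = (m·K_{n-1}) ∨ K₁`
satisfies `η(W_n^m) = n - 1`. -/
theorem eta_windmill (n m : ℕ) (hn : 3 ≤ n) (hm : 2 ≤ m) :
    eta (joinK (copiesK m (n - 1)) 1) = n - 1 :=
  eta_eq_of_isAdditiveColoring (isAdditiveColoring_windmill hm (by omega))
    fun _ _ hg => hg.le_of_windmill ⟨0, by omega⟩
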